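/- Let G be a finitely generated group with recursively enumerable presentation ⟨S | R⟩, and suppose that for every word w over S not representing 1 in G, the quotient of G by the normal closure of w is finite. Then the word problem for G is decidable. -/

import Mathlib

/-!
Membership in `N = ⟪R⟫` is semi-decidable because `N` consists of the products of conjugates of
relators and their inverses, which can be enumerated. For the complement there are two cases.
If `G = F/N` is finite, `w ∉ N` iff `w` lies in one of finitely many fixed nontrivial cosets,
which is again a membership question in `N`. If `G` is infinite, `w ∉ N` iff `⟨S | R ∪ {w}⟩` is
finite: it is `G/⟪w⟫`, finite by hypothesis, when `w ∉ N`, and it is `G` when `w ∈ N`. A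
presented group is finite iff it has a finite coset table: a finite list of words containing
the empty word and closed, modulo the relators, under left multiplication by generators; such a
table can be searched for. By Post's theorem the word problem is then decidable.
-/

open Primrec

namespace REPred

variable {α β : Type*} [Primcodable α] [Primcodable β]

theorem of_exists_primrecRel {p : α → Prop} {q : α → β → Prop} (hq : PrimrecRel q)
    (h : ∀ a, p a ↔ ∃ b, q a b) : REPred p := by
  classical
  have hdecode : PrimrecRel fun a n => ∃ b ∈ Encodable.decode (α := β) n, q a b := by
    refine Primrec.primrecPred ((option_casesOn (Primrec.decode.comp snd) (const false)
      (hq.decide.comp (fst.comp fst) snd).to₂).of_eq fun x => ?_)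
    dsimp only
    cases Encodable.decode (α := β) x.2 <;> simp
  refine (Partrec.rfind hdecode.decide.to_comp.partrec₂).dom_re.of_eq fun a => ?_
  simp only [Nat.rfind_dom, PFun.coe_val, Part.mem_some_iff, true_eq_decide_iff, Part.some_dom,
    implies_true, and_true, h a]
  exact ⟨fun ⟨_, b, _, hb⟩ => ⟨b, hb⟩, fun ⟨b, hb⟩ => ⟨_, b, Encodable.encodek b, hb⟩⟩

theorem exists_primrecRel {p : α → Prop} (hp : REPred p) :
    ∃ q : α → ℕ → Prop, PrimrecRel q ∧ ∀ a, p a ↔ ∃ n, q a n := by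
  obtain ⟨c, hc⟩ := Nat.Partrec.Code.exists_code.1 hp
  refine ⟨fun a n => (Nat.Partrec.Code.evaln n c (Encodable.encode a)).isSome, ?_, fun a => ?_⟩
  · exact Primrec.eq.comp (option_isSome.comp (Nat.Partrec.Code.primrec_evaln.comp
      ((snd.pair (const c)).pair (Primrec.encode.comp fst)))) (const true)
  · have hdom : p a ↔ (Nat.Partrec.Code.eval c (Encodable.encode a)).Dom := by
      rw [hc]
      simp [Part.assert, Encodable.encodek]
    simp only [hdom, Part.dom_iff_mem, Option.isSome_iff_exists, Nat.Partrec.Code.evaln_complete]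
    exact ⟨fun ⟨x, n, hx⟩ => ⟨n, x, hx⟩, fun ⟨n, x, hx⟩ => ⟨x, n, hx⟩⟩

theorem comp {p : α → Prop} {f : β → α} (hp : REPred p) (hf : Computable f) :
    REPred fun b => p (f b) :=
  Partrec.comp hp hf

protected theorem or {p r : α → Prop} (hp : REPred p) (hr : REPred r) : REPred fun a => p a ∨ r a := by
  obtain ⟨q, hq, hpq⟩ := hp.exists_primrecRel
  obtain ⟨s, hs, hrs⟩ := hr.exists_primrecRel
  exact of_exists_primrecRel (q := fun a n => q a n ∨ s a n) (hq.or hs) fun a => by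
    simp only [hpq, hrs, exists_or]

protected theorem and {p r : α → Prop} (hp : REPred p) (hr : REPred r) : REPred fun a => p a ∧ r a := by
  obtain ⟨q, hq, hpq⟩ := hp.exists_primrecRel
  obtain ⟨s, hs, hrs⟩ := hr.exists_primrecRel
  refine of_exists_primrecRel (q := fun a (nm : ℕ × ℕ) => q a nm.1 ∧ s a nm.2)
    ((hq.comp fst (fst.comp snd)).and (hs.comp fst (snd.comp snd))) fun a => ?_
  simp only [hpq, hrs, Prod.exists, exists_and_left, exists_and_right]

theorem projection {p : α → β → Prop} (hp : REPred fun x : α × β => p x.1 x.2) :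
    REPred fun a => ∃ b, p a b := by
  obtain ⟨q, hq, hpq⟩ := hp.exists_primrecRel
  refine of_exists_primrecRel (q := fun a (bn : β × ℕ) => q (a, bn.1) bn.2)
    (hq.comp (fst.pair (fst.comp snd)) (snd.comp snd)) fun a => ?_
  simp only [Prod.exists, ← hpq]

theorem exists_mem_list {p : α → β → Prop} {l : α → List β} (hl : Primrec l)
    (hp : REPred fun x : α × β => p x.1 x.2) : REPred fun a => ∃ b ∈ l a, p a b := by
  obtain ⟨q, hq, hpq⟩ := hp.exists_primrecRel
  refine of_exists_primrecRel (q := fun a n => ∃ b ∈ l a, q (a, b) n)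
    ((PrimrecRel.exists_mem_list (R := fun b (x : α × ℕ) => q (x.1, b) x.2)
      (hq.comp ((fst.comp snd).pair fst) (snd.comp snd))).comp (hl.comp fst) Primrec.id)
    fun a => ?_
  exact ⟨fun ⟨b, hb, hab⟩ => let ⟨n, hn⟩ := (hpq (a, b)).1 hab; ⟨n, b, hb, hn⟩,
    fun ⟨n, b, hb, hn⟩ => ⟨b, hb, (hpq (a, b)).2 ⟨n, hn⟩⟩⟩

theorem forall_mem_list {p : α → β → Prop} {l : α → List β} (hl : Primrec l)
    (hp : REPred fun x : α × β => p x.1 x.2) : REPred fun a => ∀ b ∈ l a, p a b := by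
  obtain ⟨q, hq, hpq⟩ := hp.exists_primrecRel
  have hbounded : PrimrecRel fun (N : ℕ) (x : α × β) => ∃ n ∈ List.range N, q x n :=
    (PrimrecRel.exists_mem_list (R := fun n x => q x n) (hq.comp snd fst)).comp
      (list_range.comp fst) snd
  refine of_exists_primrecRel (q := fun a N => ∀ b ∈ l a, ∃ n ∈ List.range N, q (a, b) n)
    ((PrimrecRel.forall_mem_list (R := fun b (x : α × ℕ) => ∃ n ∈ List.range x.2, q (x.1, b) n)
      (hbounded.comp (snd.comp snd) ((fst.comp snd).pair fst))).comp
      (hl.comp fst) Primrec.id) fun a => ?_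
  simp only [List.mem_range]
  constructor
  · intro h
    have : ∀ᶠ N in Filter.atTop, ∀ b ∈ {b | b ∈ l a}, ∃ n < N, q (a, b) n :=
      (l a).finite_toSet.eventually_all.2 fun b hb =>
        let ⟨n, hn⟩ := (hpq (a, b)).1 (h b hb)
        (Filter.eventually_gt_atTop n).mono fun _ hN => ⟨n, hN, hn⟩
    exact this.exists
  · rintro ⟨N, hN⟩ b hb
    obtain ⟨n, -, hn⟩ := hN b hb
    exact (hpq (a, b)).2 ⟨n, hn⟩

theorem forall_fintype [Fintype β] {p : α → β → Prop} (hp : REPred fun x : α × β => p x.1 x.2) :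
    REPred fun a => ∀ b, p a b :=
  (forall_mem_list (const Finset.univ.toList) hp).of_eq fun _ => by simp

end REPred

namespace Subgroup

variable {G : Type*} [Group G]

theorem mem_normalClosure_iff_exists_list {s : Set G} {x : G} :
    x ∈ normalClosure s ↔ ∃ l : List (G × G), (∀ p ∈ l, p.2 ∈ s ∨ p.2⁻¹ ∈ s) ∧
      (l.map fun p => p.1 * p.2 * p.1⁻¹).prod = x := by
  constructor
  · intro hx
    rw [normalClosure, ← mem_toSubmonoid, closure_toSubmonoid] at hx
    obtain ⟨l, hl, rfl⟩ := Submonoid.exists_list_of_mem_closure hx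
    clear hx
    induction l with
    | nil => exact ⟨[], by simp, rfl⟩
    | cons y l ih =>
      obtain ⟨L, hL, hLl⟩ := ih fun z hz => hl z (List.mem_cons_of_mem _ hz)
      have hy : ∃ p : G × G, (p.2 ∈ s ∨ p.2⁻¹ ∈ s) ∧ p.1 * p.2 * p.1⁻¹ = y := by
        rcases hl y List.mem_cons_self with hy | hy
        · obtain ⟨r, hr, hc⟩ := Group.mem_conjugatesOfSet_iff.1 hy
          obtain ⟨c, rfl⟩ := isConj_iff.1 hc
          exact ⟨(c, r), Or.inl hr, rfl⟩
        · obtain ⟨r, hr, hc⟩ := Group.mem_conjugatesOfSet_iff.1 (Set.mem_inv.1 hy)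
          obtain ⟨c, hc⟩ := isConj_iff.1 hc
          refine ⟨(c, r⁻¹), Or.inr (by simpa using hr), ?_⟩
          rw [← inv_inv y, ← hc]
          group
      obtain ⟨p, hp, rfl⟩ := hy
      exact ⟨p :: L, List.forall_mem_cons.2 ⟨hp, hL⟩, by simp [hLl]⟩
  · rintro ⟨l, hl, rfl⟩
    refine list_prod_mem fun y hy => ?_
    obtain ⟨p, hp, rfl⟩ := List.mem_map.1 hy
    refine (normalClosure_normal).conj_mem _ ?_ _
    rcases hl p hp with h | h
    · exact subset_normalClosure h
    · simpa using inv_mem (subset_normalClosure h)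

theorem mem_iff_of_coe_eq_coe {M : Subgroup G} {a b : G} (h : (a : G ⧸ M) = b) :
    a ∈ M ↔ b ∈ M := by
  rw [← M.mul_mem_cancel_right (QuotientGroup.eq.1 h), mul_inv_cancel_left]

theorem exists_list_notMem_iff (M : Subgroup G) [Finite (G ⧸ M)] :
    ∃ V : List G, ∀ g, g ∉ M ↔ ∃ v ∈ V, (v : G ⧸ M) = g := by
  classical
  have := Fintype.ofFinite (G ⧸ M)
  refine ⟨((Finset.univ : Finset (G ⧸ M)).toList.map Quotient.out).filter (· ∉ M),
    fun g => ⟨fun hg => ⟨Quotient.out (g : G ⧸ M), ?_, Quotient.out_eq' _⟩, ?_⟩⟩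
  · simp only [List.mem_filter, List.mem_map, Finset.mem_toList, Finset.mem_univ, true_and,
      decide_eq_true_eq]
    exact ⟨⟨_, rfl⟩, (mem_iff_of_coe_eq_coe (Quotient.out_eq' _)).not.2 hg⟩
  · rintro ⟨v, hv, hvg⟩
    simp only [List.mem_filter, decide_eq_true_eq] at hv
    exact (mem_iff_of_coe_eq_coe hvg).not.1 hv.2

open QuotientGroup in
noncomputable def quotientNormalClosureUnionEquiv (s t : Set G) :
    G ⧸ normalClosure (s ∪ t) ≃* (G ⧸ normalClosure s) ⧸ normalClosure ((↑) '' t) :=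
  (quotientQuotientEquivQuotient _ _ (normalClosure_mono Set.subset_union_left)).symm.trans <|
    quotientMulEquivOfEq <| by
      rw [normalClosure_union, map_sup, map_mk'_self, bot_sup_eq,
        map_normalClosure _ _ (mk'_surjective _)]
      rfl

theorem notMem_normalClosure_iff_finite {R : Set G} {x : G}
    (hG : Infinite (G ⧸ normalClosure R))
    (hfin : x ∉ normalClosure R →
      Finite ((G ⧸ normalClosure R) ⧸ normalClosure {(x : G ⧸ normalClosure R)})) :
    x ∉ normalClosure R ↔ Finite (G ⧸ normalClosure (R ∪ {x})) := by
  refine ⟨fun hx => ?_, fun h hx => ?_⟩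
  · have := hfin hx
    rw [← Set.image_singleton] at this
    exact Finite.of_equiv _ (quotientNormalClosureUnionEquiv R {x}).symm.toEquiv
  · rw [normalClosure_union,
      sup_eq_left.2 (normalClosure_le_normal (Set.singleton_subset_iff.2 hx))] at h
    exact not_finite (G ⧸ normalClosure R)

end Subgroup

namespace FreeGroup

variable {α : Type*}

def conjugatesProd (L : List (List (α × Bool) × List (α × Bool))) : List (α × Bool) :=
  L.flatMap fun t => t.1 ++ t.2 ++ invRev t.1

theorem mk_conjugatesProd (L : List (List (α × Bool) × List (α × Bool))) :
    mk (conjugatesProd L) = (L.map fun t => mk t.1 * mk t.2 * (mk t.1)⁻¹).prod := by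
  induction L with
  | nil => rfl
  | cons t L ih =>
    rw [List.map_cons, List.prod_cons, ← ih, inv_mk, mul_mk, mul_mk, mul_mk]
    simp [conjugatesProd]

theorem reduce_eq_foldr [DecidableEq α] (L : List (α × Bool)) :
    reduce L = L.foldr (fun x l => if l.head? = some (x.1, !x.2) then l.tail else x :: l) [] := by
  induction L with
  | nil => rfl
  | cons x L ih =>
    rw [reduce.cons, List.foldr_cons, ← ih]
    rcases reduce L with _ | ⟨y, l⟩
    · rfl
    · simp only [List.head?_cons, Option.some.injEq, List.tail_cons]
      congr 1
      rcases x with ⟨a, _ | _⟩ <;> rcases y with ⟨b, _ | _⟩ <;> simp [eq_comm]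

theorem finite_quotient_iff_exists_cosetTable {M : Subgroup (FreeGroup α)} :
    Finite (FreeGroup α ⧸ M) ↔ ∃ C : List (List (α × Bool)), [] ∈ C ∧
      ∀ v ∈ C, ∀ x, ∃ v' ∈ C, ((mk (x :: v) : FreeGroup α) : FreeGroup α ⧸ M) = mk v' := by
  classical
  constructor
  · intro
    have := Fintype.ofFinite (FreeGroup α ⧸ M)
    have hout (q : FreeGroup α ⧸ M) : ((mk q.out.toWord : FreeGroup α) : FreeGroup α ⧸ M) = q := by
      rw [mk_toWord, QuotientGroup.out_eq']
    refine ⟨[] :: Finset.univ.toList.map fun q : FreeGroup α ⧸ M => q.out.toWord,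
      List.mem_cons_self, fun v _ x => ⟨_, ?_, (hout _).symm⟩⟩
    exact List.mem_cons_of_mem _ (List.mem_map_of_mem (Finset.mem_toList.2 (Finset.mem_univ _)))
  · rintro ⟨C, hnil, hC⟩
    have hcover (u : List (α × Bool)) :
        ∃ v ∈ C, ((mk v : FreeGroup α) : FreeGroup α ⧸ M) = mk u := by
      induction u with
      | nil => exact ⟨[], hnil, rfl⟩
      | cons x u ih =>
        obtain ⟨v, hv, hvu⟩ := ih
        obtain ⟨v', hv', hxv⟩ := hC v hv x
        refine ⟨v', hv', ?_⟩
        have hcons (w : List (α × Bool)) : (mk (x :: w) : FreeGroup α) = mk [x] • mk w := by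
          rw [smul_eq_mul, mul_mk]; rfl
        rw [← hxv, hcons v, hcons u, ← MulAction.Quotient.smul_mk, ← MulAction.Quotient.smul_mk, hvu]
    refine Set.finite_univ_iff.1 <| ((C.map fun v => ((mk v : FreeGroup α) : FreeGroup α ⧸ M)
      ).finite_toSet).subset fun q _ => ?_
    induction q using QuotientGroup.induction_on with | H g => ?_
    obtain ⟨v, hv, hvg⟩ := hcover g.toWord
    rw [mk_toWord] at hvg
    exact List.mem_map.2 ⟨v, hv, hvg⟩

theorem mk_mem_normalClosure_iff [DecidableEq α] {S : Set (FreeGroup α)} {w : List (α × Bool)} :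
    mk w ∈ Subgroup.normalClosure S ↔
      ∃ L : List (List (α × Bool) × List (α × Bool)),
        (∀ t ∈ L, mk t.2 ∈ S ∨ mk (invRev t.2) ∈ S) ∧ mk w = mk (conjugatesProd L) := by
  simp only [Subgroup.mem_normalClosure_iff_exists_list, mk_conjugatesProd, ← inv_mk]
  constructor
  · rintro ⟨l, hl, hw⟩
    refine ⟨l.map fun p => (p.1.toWord, p.2.toWord), ?_, ?_⟩
    · simpa only [List.forall_mem_map, mk_toWord] using hl
    · simp only [← hw, List.map_map, Function.comp_def, mk_toWord]
  · rintro ⟨L, hL, hw⟩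
    exact ⟨L.map fun t => (mk t.1, mk t.2), List.forall_mem_map.2 hL,
      by simp only [hw, List.map_map, Function.comp_def]⟩

theorem coe_mk_eq_coe_mk_iff {M : Subgroup (FreeGroup α)} {u v : List (α × Bool)} :
    ((mk u : FreeGroup α) : FreeGroup α ⧸ M) = mk v ↔ mk (invRev u ++ v) ∈ M := by
  rw [QuotientGroup.eq, inv_mk, mul_mk]

variable [Primcodable α]

theorem primrec_invRev : Primrec (invRev : List (α × Bool) → List (α × Bool)) :=
  list_reverse.comp <| list_map Primrec.id <| (fst.comp snd).pair (Primrec.not.comp (snd.comp snd))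

theorem primrec_reduce [DecidableEq α] : Primrec (reduce : List (α × Bool) → List (α × Bool)) := by
  have hx := fst.comp (snd (α := List (α × Bool)) (β := (α × Bool) × List (α × Bool)))
  have hl := snd.comp (snd (α := List (α × Bool)) (β := (α × Bool) × List (α × Bool)))
  have hstep := Primrec.ite (Primrec.eq.comp (list_head?.comp hl)
      (option_some.comp ((fst.comp hx).pair (Primrec.not.comp (snd.comp hx)))))
    (list_tail.comp hl) (list_cons.comp hx hl)
  exact (list_foldr Primrec.id (const []) hstep.to₂).of_eq fun L => (reduce_eq_foldr L).symm

theorem primrecRel_mk_eq [DecidableEq α] :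
    PrimrecRel fun u v : List (α × Bool) => mk u = mk v :=
  (Primrec.eq.comp (primrec_reduce.comp fst) (primrec_reduce.comp snd)).of_eq fun _ =>
    ⟨reduce.exact, reduce.sound⟩

theorem primrec_conjugatesProd : Primrec (conjugatesProd (α := α)) :=
  list_flatMap Primrec.id <| (list_append.comp (list_append.comp (fst.comp snd) (snd.comp snd))
    (primrec_invRev.comp (fst.comp snd))).to₂

theorem rePred_mem_normalClosure [DecidableEq α] {γ : Type*} [Primcodable γ]
    {S : γ → Set (FreeGroup α)} (hS : REPred fun x : γ × List (α × Bool) => mk x.2 ∈ S x.1) :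
    REPred fun x : γ × List (α × Bool) => mk x.2 ∈ Subgroup.normalClosure (S x.1) := by
  simp only [mk_mem_normalClosure_iff]
  refine REPred.projection (REPred.and ?_ ?_)
  · refine REPred.forall_mem_list snd ?_
    -- `of_eq` lets `comp` elaborate before meeting the goal, avoiding higher-order unification
    exact .or
      ((hS.comp ((fst.comp (fst.comp fst)).pair (snd.comp snd)).to_comp).of_eq fun _ => .rfl)
      ((hS.comp ((fst.comp (fst.comp fst)).pair (primrec_invRev.comp (snd.comp snd))).to_comp).of_eq
        fun _ => .rfl)
  · exact (primrecRel_mk_eq.comp (snd.comp fst) (primrec_conjugatesProd.comp snd)).computablePred.to_re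

theorem rePred_notMem_of_finite [DecidableEq α] {M : Subgroup (FreeGroup α)}
    [Finite (FreeGroup α ⧸ M)] (hM : REPred fun w : List (α × Bool) => mk w ∈ M) :
    REPred fun w : List (α × Bool) => mk w ∉ M := by
  obtain ⟨V, hV⟩ := M.exists_list_notMem_iff
  have hcoset (w : List (α × Bool)) : mk w ∉ M ↔ ∃ v ∈ V.map toWord, mk (invRev v ++ w) ∈ M := by
    simp only [hV, ← coe_mk_eq_coe_mk_iff, List.mem_map, exists_exists_and_eq_and, mk_toWord]
  simp only [hcoset]
  exact REPred.exists_mem_list (const _)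
    ((hM.comp (list_append.comp (primrec_invRev.comp snd) fst).to_comp).of_eq fun _ => .rfl)

theorem rePred_finite_quotient [DecidableEq α] [Fintype α] {γ : Type*} [Primcodable γ]
    {M : γ → Subgroup (FreeGroup α)}
    (hM : REPred fun x : γ × List (α × Bool) => mk x.2 ∈ M x.1) :
    REPred fun c => Finite (FreeGroup α ⧸ M c) := by
  have hnil : PrimrecPred fun x : γ × List (List (α × Bool)) => [] ∈ x.2 :=
    ((PrimrecRel.exists_mem_list Primrec.eq).comp snd (const [])).of_eq fun _ => by simp
  simp only [finite_quotient_iff_exists_cosetTable, coe_mk_eq_coe_mk_iff]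
  refine REPred.projection (REPred.and hnil.computablePred.to_re (REPred.forall_mem_list snd
    (REPred.forall_fintype (REPred.exists_mem_list (snd.comp (fst.comp fst)) ?_))))
  exact (hM.comp ((fst.comp (fst.comp (fst.comp fst))).pair (list_append.comp (primrec_invRev.comp
    (list_cons.comp (snd.comp fst) (snd.comp (fst.comp fst)))) snd)).to_comp).of_eq fun _ => .rfl

end FreeGroup

theorem stmt_16 {k : ℕ} (R : Set (FreeGroup (Fin k)))
    (hR : REPred (fun w : List (Fin k × Bool) => FreeGroup.mk w ∈ R))
    (hfin : ∀ w : List (Fin k × Bool), FreeGroup.mk w ∉ Subgroup.normalClosure R →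
      Finite ((FreeGroup (Fin k) ⧸ Subgroup.normalClosure R) ⧸
        Subgroup.normalClosure
          ({(QuotientGroup.mk (FreeGroup.mk w) :
              FreeGroup (Fin k) ⧸ Subgroup.normalClosure R)} :
            Set (FreeGroup (Fin k) ⧸ Subgroup.normalClosure R)))) :
    ComputablePred (fun w : List (Fin k × Bool) =>
      FreeGroup.mk w ∈ Subgroup.normalClosure R) := by
  have hpos : REPred fun w : List (Fin k × Bool) => FreeGroup.mk w ∈ Subgroup.normalClosure R :=
    (FreeGroup.rePred_mem_normalClosure (S := fun _ : Unit => R) (hR.comp Computable.snd)).comp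
      ((Computable.const ()).pair Computable.id)
  have hrel : REPred fun x : List (Fin k × Bool) × List (Fin k × Bool) =>
      FreeGroup.mk x.2 ∈ Subgroup.normalClosure (R ∪ {FreeGroup.mk x.1}) :=
    FreeGroup.rePred_mem_normalClosure (S := fun w => R ∪ {FreeGroup.mk w}) <|
      (hR.comp Computable.snd).or
        (FreeGroup.primrecRel_mk_eq.comp snd fst).computablePred.to_re
  have hneg : REPred fun w : List (Fin k × Bool) => FreeGroup.mk w ∉ Subgroup.normalClosure R := by
    rcases finite_or_infinite (FreeGroup (Fin k) ⧸ Subgroup.normalClosure R) with hG | hG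
    · exact FreeGroup.rePred_notMem_of_finite hpos
    · exact (FreeGroup.rePred_finite_quotient hrel).of_eq fun w =>
        (Subgroup.notMem_normalClosure_iff_finite hG (hfin w)).symm
  exact ComputablePred.computable_iff_re_compl_re'.2 ⟨hpos, hneg⟩
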